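/- For j, n, m ≥ 3, the size Ramsey multipartite number satisfies m_j(S_n, S_m) ≥ ⌈(n+m-4)/(j-1)⌉, i.e., K_{j×s} ↛ (S_n, S_m) for s = ⌈(n+m-4)/(j-1)⌉ - 1 (assuming s ≥ 1). -/

import Mathlib

/-- The complete balanced multipartite graph `K_{j×s}` on `Fin j × Fin s`:
vertices are adjacent iff they lie in different parts (different first coordinate). -/
def multiK (j s : ℕ) : SimpleGraph (Fin j × Fin s) where
  Adj u v := u.1 ≠ v.1
  symm := ⟨fun _ _ h => h.symm⟩
  loopless := ⟨fun _ h => h rfl⟩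

/-- Degree of a vertex, via `Set.ncard` of its neighbor set. -/
noncomputable def mdeg {V : Type*} (G : SimpleGraph V) (v : V) : ℕ :=
  (G.neighborSet v).ncard

/-- `K_{j×s} → (S_n, S_m)`: every red/blue edge coloring (red subgraph `R ≤ K_{j×s}`,
blue the rest) contains a red `K_{1,n-1}` or a blue `K_{1,m-1}`. -/
def Arrows (j s n m : ℕ) : Prop :=
  ∀ R : SimpleGraph (Fin j × Fin s), R ≤ multiK j s →
    (∃ v, n - 1 ≤ mdeg R v) ∨ (∃ v, m - 1 ≤ mdeg (multiK j s \ R) v)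

/-- The size Ramsey multipartite number `m_j(S_n, S_m)`. -/
noncomputable def mj (j n m : ℕ) : ℕ := sInf {s | Arrows j s n m}

/-!
`K_{j×s}` is the circulant graph on the group `Fin j × Fin s` with jumps `{x | x.1 ≠ 0}`,
so it is `(j-1)s`-regular. Any negation-closed set `T` of such jumps gives a red circulant
subgraph that is `#T`-regular, with a `((j-1)s - #T)`-regular blue complement. Negation-closed
sets of every even size exist, so `#T` can be taken to be `n - 2` or `n - 3` (or all but at
most one jump when `(j-1)s ≤ n - 2`); when `(j-1)s ≤ n + m - 5` this leaves no red `S_n` and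
no blue `S_m`. That the defining set of `m_j(S_n, S_m)` is nonempty follows because a vertex
of degree at least `n + m - 3` sees `n - 1` red or `m - 1` blue edges.
-/

open Finset SimpleGraph

theorem mdeg_sdiff_add_mdeg {V : Type*} [Finite V] {G H : SimpleGraph V} (h : H ≤ G) (v : V) :
    mdeg (G \ H) v + mdeg H v = mdeg G v := by
  rw [mdeg, mdeg, mdeg, neighborSet_sdiff]
  exact Set.ncard_sdiff_add_ncard_of_subset fun _ hu => h hu

section Circulant

variable {G : Type*} [AddGroup G] {C : Set G}

theorem circulantGraph_adj_iff_of_neg_mem (h0 : 0 ∉ C) (hneg : ∀ x ∈ C, -x ∈ C) (u v : G) :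
    (circulantGraph C).Adj u v ↔ v - u ∈ C := by
  rw [circulantGraph_adj]
  constructor
  · rintro ⟨-, huv | hvu⟩
    · simpa using hneg _ huv
    · exact hvu
  · intro hvu
    exact ⟨fun huv => h0 (by simpa [huv] using hvu), Or.inr hvu⟩

theorem mdeg_circulantGraph (h0 : 0 ∉ C) (hneg : ∀ x ∈ C, -x ∈ C) (v : G) :
    mdeg (circulantGraph C) v = C.ncard := by
  have hnbr : (circulantGraph C).neighborSet v = (· + v) '' C := by
    ext u
    rw [mem_neighborSet, circulantGraph_adj_iff_of_neg_mem h0 hneg, Set.image_add_right]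
    simp [sub_eq_add_neg]
  rw [mdeg, hnbr, Set.ncard_image_of_injective _ (add_left_injective v)]

theorem circulantGraph_mono {D : Set G} (h : C ⊆ D) : circulantGraph C ≤ circulantGraph D :=
  fun _ _ ⟨hne, hCuv⟩ => ⟨hne, hCuv.imp (@h _) (@h _)⟩

end Circulant

section NegClosed

variable {G : Type*} [InvolutiveNeg G] [DecidableEq G]

theorem exists_neg_closed_subset_card_eq_two {U : Finset G} (hU : ∀ x ∈ U, -x ∈ U)
    (h2 : 2 ≤ #U) : ∃ P ⊆ U, (∀ x ∈ P, -x ∈ P) ∧ #P = 2 := by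
  by_cases h : ∃ x ∈ U, -x ≠ x
  · obtain ⟨x, hx, hne⟩ := h
    refine ⟨{x, -x}, ?_, ?_, card_pair hne.symm⟩
    · simp [insert_subset_iff, hx, hU x hx]
    · simp only [mem_insert, mem_singleton]
      rintro y (rfl | rfl) <;> simp
  · push Not at h
    obtain ⟨x, hx, y, hy, hxy⟩ := one_lt_card.1 h2
    refine ⟨{x, y}, ?_, ?_, card_pair hxy⟩
    · simp [insert_subset_iff, hx, hy]
    · simp only [mem_insert, mem_singleton]
      rintro z (rfl | rfl)
      · exact Or.inl (h z hx)
      · exact Or.inr (h z hy)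

theorem exists_neg_closed_subset_card_eq_two_mul {S : Finset G} (hS : ∀ x ∈ S, -x ∈ S)
    {k : ℕ} (hk : 2 * k ≤ #S) : ∃ T ⊆ S, (∀ x ∈ T, -x ∈ T) ∧ #T = 2 * k := by
  induction k with
  | zero => exact ⟨∅, empty_subset _, by simp, rfl⟩
  | succ k ih =>
    obtain ⟨T, hTS, hT, hcard⟩ := ih (by omega)
    have hST : ∀ x ∈ S \ T, -x ∈ S \ T := by
      intro x hx
      rw [mem_sdiff] at hx ⊢
      exact ⟨hS x hx.1, fun h => hx.2 (by simpa using hT _ h)⟩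
    obtain ⟨P, hPST, hP, hPcard⟩ :=
      exists_neg_closed_subset_card_eq_two hST (by rw [card_sdiff_of_subset hTS]; omega)
    have hdisj : Disjoint T P := disjoint_of_subset_right hPST disjoint_sdiff
    refine ⟨T ∪ P, union_subset hTS fun x hx => (mem_sdiff.1 (hPST hx)).1, ?_, ?_⟩
    · intro x hx
      rcases mem_union.1 hx with hx | hx
      · exact mem_union_left _ (hT x hx)
      · exact mem_union_right _ (hP x hx)
    · rw [card_union_of_disjoint hdisj]; omega

end NegClosed

theorem multiK_eq_circulantGraph (j s : ℕ) [NeZero j] [NeZero s] :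
    multiK j s = circulantGraph {x | x.1 ≠ 0} := by
  ext u v
  simp only [circulantGraph_adj, Set.mem_ofPred_eq, Prod.fst_sub, sub_ne_zero]
  show u.1 ≠ v.1 ↔ _
  constructor
  · exact fun h => ⟨fun huv => h (congrArg Prod.fst huv), Or.inl h⟩
  · rintro ⟨-, h | h⟩
    · exact h
    · exact Ne.symm h

theorem ncard_fst_ne_zero (j s : ℕ) [NeZero j] :
    {x : Fin j × Fin s | x.1 ≠ 0}.ncard = (j - 1) * s := by
  have : {x : Fin j × Fin s | x.1 ≠ 0} = {0}ᶜ ×ˢ Set.univ := by ext; simp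
  rw [this, Set.ncard_prod, Set.ncard_compl, Set.ncard_singleton, Set.ncard_univ]
  simp

theorem mdeg_multiK (j s : ℕ) [NeZero j] [NeZero s] (v : Fin j × Fin s) :
    mdeg (multiK j s) v = (j - 1) * s := by
  rw [multiK_eq_circulantGraph, mdeg_circulantGraph (by simp) (fun x hx => by simpa using hx),
    ncard_fst_ne_zero]

theorem not_arrows_of_add_le (j s n m : ℕ) (hn : 2 ≤ n) (hm : 3 ≤ m)
    (h : (j - 1) * s + 5 ≤ n + m) : ¬ Arrows j s n m := by
  intro harr
  rcases Nat.eq_zero_or_pos j with rfl | hj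
  · rcases harr ⊥ bot_le with ⟨v, -⟩ | ⟨v, -⟩ <;> exact v.1.elim0
  rcases Nat.eq_zero_or_pos s with rfl | hs
  · rcases harr ⊥ bot_le with ⟨v, -⟩ | ⟨v, -⟩ <;> exact v.2.elim0
  have : NeZero j := ⟨hj.ne'⟩
  have : NeZero s := ⟨hs.ne'⟩
  classical
  set S : Finset (Fin j × Fin s) := {x | x.1 ≠ 0}
  have hS : #S = (j - 1) * s := by
    rw [← ncard_fst_ne_zero j s, ← Set.ncard_coe_finset]; simp [S]
  obtain ⟨T, hTS, hT, hTcard⟩ := exists_neg_closed_subset_card_eq_two_mul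
    (S := S) (k := min (n - 2) ((j - 1) * s) / 2) (by simp [S]) (by omega)
  have hT0 : (0 : Fin j × Fin s) ∉ (T : Set _) := fun h0 => by simpa [S] using hTS h0
  have hSset : (S : Set (Fin j × Fin s)) = {x | x.1 ≠ 0} := by ext; simp [S]
  set R := circulantGraph (T : Set (Fin j × Fin s))
  have hR : R ≤ multiK j s := by
    rw [multiK_eq_circulantGraph, ← hSset]
    exact circulantGraph_mono hTS
  have hRdeg : ∀ v, mdeg R v = #T := fun v => by
    rw [mdeg_circulantGraph hT0 hT, Set.ncard_coe_finset]
  have hBdeg : ∀ v, mdeg (multiK j s \ R) v = (j - 1) * s - #T := fun v => by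
    rw [← mdeg_multiK j s v, ← mdeg_sdiff_add_mdeg hR v, hRdeg]; omega
  rcases harr R hR with ⟨v, hv⟩ | ⟨v, hv⟩
  · rw [hRdeg] at hv; omega
  · rw [hBdeg] at hv; omega

theorem arrows_of_le_add (j s n m : ℕ) (hj : 0 < j) (hs : 0 < s)
    (h : n + m ≤ (j - 1) * s + 3) : Arrows j s n m := by
  have : NeZero j := ⟨hj.ne'⟩
  have : NeZero s := ⟨hs.ne'⟩
  intro R hR
  by_contra! hno
  obtain ⟨hred, hblue⟩ := hno
  have hsplit := mdeg_sdiff_add_mdeg hR 0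
  rw [mdeg_multiK] at hsplit
  have := hred 0
  have := hblue 0
  omega

theorem not_arrows_of_lt_ceilDiv {j n m b : ℕ} (hj : 2 ≤ j) (hn : 2 ≤ n) (hm : 3 ≤ m)
    (hb : b < (n + m - 4) ⌈/⌉ (j - 1)) : ¬ Arrows j b n m := by
  rw [lt_iff_not_ge, ceilDiv_le_iff_le_mul (by omega), not_le] at hb
  exact not_arrows_of_add_le j b n m hn hm (by omega)

theorem stmt11_general (j n m s : ℕ) (hj : 3 ≤ j) (hn : 3 ≤ n) (hm : 3 ≤ m)
    (hs : s = (n + m - 4) ⌈/⌉ (j - 1) - 1) :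
    ¬ Arrows j s n m ∧ (n + m - 4) ⌈/⌉ (j - 1) ≤ mj j n m := by
  have hpos : 0 < (n + m - 4) ⌈/⌉ (j - 1) := lt_of_not_ge fun h => by
    rw [ceilDiv_le_iff_le_mul (by omega)] at h; omega
  refine ⟨not_arrows_of_lt_ceilDiv (by omega) (by omega) hm (by omega), ?_⟩
  have hbig : Arrows j (n + m) n m := arrows_of_le_add j (n + m) n m (by omega) (by omega)
    (by nlinarith [Nat.sub_add_cancel (by omega : 1 ≤ j)])
  exact le_csInf ⟨n + m, hbig⟩ fun b hb => not_lt.1 fun hlt =>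
    not_arrows_of_lt_ceilDiv (by omega) (by omega) hm hlt hb

theorem stmt11 (j n m s : ℕ) (hj : 3 ≤ j) (hn : 3 ≤ n) (hm : 3 ≤ m)
    (hs : s = (n + m - 4) ⌈/⌉ (j - 1) - 1) (hs1 : 1 ≤ s) :
    ¬ Arrows j s n m ∧ (n + m - 4) ⌈/⌉ (j - 1) ≤ mj j n m :=
  stmt11_general j n m s hj hn hm hs
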